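/- Let x₁, …, x_n ∈ ℂ and for k = 1, 2 let f_{i,k} be holomorphic functions defined near x_i with f_{i,k}(x_i) = x_{i+1 mod n} and f_{i,k}'(x_i) = λ_i (the same λ_i for k = 1 and k = 2), where |λ_1·λ_2⋯λ_n| > 1. Define the cyclic compositions g_{i,k} = f_{i+n−1 mod n, k} ∘ ⋯ ∘ f_{i+1 mod n, k} ∘ f_{i,k}, and suppose there is q ≥ 1 such that g_{i,1}^q = g_{i,2}^q near x_i for every i. Then f_{i,1} = f_{i,2} in a neighborhood of x_i for every i. -/

import Mathlib

/-!
Each `f_{i,k}` semiconjugates the return map `g_{i,k}` to `g_{i+1,k}`, hence `g_{i,k}^q` to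
`g_{i+1,k}^q`. Since `g_{i,1}^q = g_{i,2}^q` near every `x_i`, both `f_{i,1}` and `f_{i,2}`
semiconjugate the same pair of germs `P' = g_{i,1}^q` (at `x_i`) and `P = g_{i+1,1}^q`
(at `x_{i+1}`), whose multipliers both equal `ν = (λ_1⋯λ_n)^q` with `|ν| > 1`.
A semiconjugacy `h` with `P ∘ h = h ∘ P'` is determined by its 1-jet when `ν^m ≠ ν` for
`m ≥ 2`: the `m`-th Taylor coefficient of the identity reads
`ν h_m + (lower) = ν^m h_m + (lower)`, where "lower" only involves `h_j` for `j < m`.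
-/

open Filter Topology

/-- The composition `f (i + (m-1)) ∘ ⋯ ∘ f (i + 1) ∘ f i` around the cycle,
starting at index `i`, with `m` factors. -/
def cyclicComp {n : ℕ} (f : ZMod n → ℂ → ℂ) (i : ZMod n) : ℕ → ℂ → ℂ
  | 0 => id
  | m + 1 => f (i + (m : ZMod n)) ∘ cyclicComp f i m

namespace FormalMultilinearSeries

variable {𝕜 E : Type*} [NontriviallyNormedField 𝕜] [NormedAddCommGroup E] [NormedSpace 𝕜 E]

theorem ext_coeff {p q : FormalMultilinearSeries 𝕜 𝕜 E} (h : ∀ m, p.coeff m = q.coeff m) :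
    p = q := by
  funext m
  rw [← mkPiRing_coeff_eq p, h, mkPiRing_coeff_eq]

theorem coeff_comp (p : FormalMultilinearSeries 𝕜 𝕜 E) (a : FormalMultilinearSeries 𝕜 𝕜 𝕜)
    (m : ℕ) : (p.comp a).coeff m =
      ∑ c : Composition m, (∏ i, a.coeff (c.blocksFun i)) • p.coeff c.length := by
  rw [coeff, FormalMultilinearSeries.comp, sum_apply]
  refine Finset.sum_congr rfl fun c _ => ?_
  rw [compAlongComposition_apply, apply_eq_prod_smul_coeff]
  rfl

theorem coeff_comp_sub_coeff_comp_inner (p : FormalMultilinearSeries 𝕜 𝕜 E)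
    {a b : FormalMultilinearSeries 𝕜 𝕜 𝕜} {m : ℕ} (hm : 0 < m)
    (hab : ∀ j < m, a.coeff j = b.coeff j) :
    (p.comp a).coeff m - (p.comp b).coeff m = (a.coeff m - b.coeff m) • p.coeff 1 := by
  rw [coeff_comp, coeff_comp, ← Finset.sum_sub_distrib,
    Finset.sum_eq_single_of_mem (Composition.single m hm) (Finset.mem_univ _)]
  · have (x : FormalMultilinearSeries 𝕜 𝕜 𝕜) :
        ∏ i, x.coeff ((Composition.single m hm).blocksFun i) = x.coeff m :=
      Fin.prod_univ_one (fun i => x.coeff ((Composition.single m hm).blocksFun i))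
    rw [this, this, Composition.single_length, sub_smul]
  · intro c _ hc
    have hlen : 1 < c.length := by
      have := c.length_pos_of_pos hm
      have := mt (Composition.eq_single_iff_length hm).2 hc
      omega
    have hblocks (i : Fin c.length) : c.blocksFun i < m := by
      obtain ⟨j, hj⟩ := Fintype.exists_ne_of_one_lt_card (by simpa using hlen) i
      calc c.blocksFun i < ∑ k, c.blocksFun k :=
            Finset.single_lt_sum hj (Finset.mem_univ _) (Finset.mem_univ _)
              (c.one_le_blocksFun j) fun k _ _ => Nat.zero_le _
        _ = m := c.sum_blocksFun
    simp [hab _ (hblocks _)]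

theorem coeff_comp_sub_coeff_comp_outer {a b : FormalMultilinearSeries 𝕜 𝕜 E}
    (p : FormalMultilinearSeries 𝕜 𝕜 𝕜) {m : ℕ} (hab : ∀ j < m, a.coeff j = b.coeff j) :
    (a.comp p).coeff m - (b.comp p).coeff m = p.coeff 1 ^ m • (a.coeff m - b.coeff m) := by
  rw [coeff_comp, coeff_comp, ← Finset.sum_sub_distrib,
    Finset.sum_eq_single_of_mem (Composition.ones m) (Finset.mem_univ _)]
  · simp [smul_sub]
  · intro c _ hc
    have hlen : c.length < m :=
      c.length_le.lt_of_ne fun h => hc (Composition.eq_ones_iff_length.2 h)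
    rw [hab _ hlen, sub_self]

theorem eq_of_comp_eq_comp_of_nonresonant {ν : 𝕜} (hν : ∀ m, 2 ≤ m → ν ^ m ≠ ν)
    {p p' a b : FormalMultilinearSeries 𝕜 𝕜 𝕜} (hp : p.coeff 1 = ν) (hp' : p'.coeff 1 = ν)
    (h0 : a.coeff 0 = b.coeff 0) (h1 : a.coeff 1 = b.coeff 1)
    (ha : p.comp a = a.comp p') (hb : p.comp b = b.comp p') : a = b := by
  refine ext_coeff fun m => ?_
  induction m using Nat.strong_induction_on with
  | _ m ih =>
    match m with
    | 0 => exact h0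
    | 1 => exact h1
    | m + 2 =>
      have key := coeff_comp_sub_coeff_comp_inner p (by omega) ih
      rw [ha, hb, coeff_comp_sub_coeff_comp_outer p' ih, hp, hp', smul_eq_mul, smul_eq_mul]
        at key
      have hprod : (a.coeff (m + 2) - b.coeff (m + 2)) * (ν ^ (m + 2) - ν) = 0 := by
        linear_combination key
      exact sub_eq_zero.1 <| (mul_eq_zero.1 hprod).resolve_right <|
        sub_ne_zero.2 (hν _ (by omega))

end FormalMultilinearSeries

section

variable {𝕜 : Type*} [NontriviallyNormedField 𝕜]

theorem HasFPowerSeriesAt.comp_eq_comp_of_semiconj {P A P' : 𝕜 → 𝕜} {a : 𝕜}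
    {p pA p' : FormalMultilinearSeries 𝕜 𝕜 𝕜} (hP : HasFPowerSeriesAt P p (A a))
    (hA : HasFPowerSeriesAt A pA a) (hP' : HasFPowerSeriesAt P' p' a) (hfix : P' a = a)
    (h : P ∘ A =ᶠ[𝓝 a] A ∘ P') : p.comp pA = pA.comp p' :=
  (hP.comp hA).eq_formalMultilinearSeries_of_eventually ((hfix ▸ hA).comp hP') h

theorem eventuallyEq_of_semiconj_of_nonresonant {ν : 𝕜} (hν : ∀ m, 2 ≤ m → ν ^ m ≠ ν)
    {P P' A B : 𝕜 → 𝕜} {a : 𝕜} (hP : AnalyticAt 𝕜 P (A a)) (hP' : AnalyticAt 𝕜 P' a)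
    (hfix : P' a = a) (hPν : deriv P (A a) = ν) (hP'ν : deriv P' a = ν)
    (hA : AnalyticAt 𝕜 A a) (hB : AnalyticAt 𝕜 B a) (hAB : A a = B a)
    (hAB' : deriv A a = deriv B a)
    (hPA : P ∘ A =ᶠ[𝓝 a] A ∘ P') (hPB : P ∘ B =ᶠ[𝓝 a] B ∘ P') : A =ᶠ[𝓝 a] B := by
  obtain ⟨p, hp⟩ := hP
  obtain ⟨p', hp'⟩ := hP'
  obtain ⟨pA, hpA⟩ := hA
  obtain ⟨pB, hpB⟩ := hB
  have hAB_series : pA = pB :=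
    FormalMultilinearSeries.eq_of_comp_eq_comp_of_nonresonant hν (hp.deriv.symm.trans hPν)
      (hp'.deriv.symm.trans hP'ν)
      ((hpA.coeff_zero 1).trans (hAB.trans (hpB.coeff_zero 1).symm))
      (hpA.deriv.symm.trans (hAB'.trans hpB.deriv))
      (hp.comp_eq_comp_of_semiconj hpA hp' hfix hPA)
      ((hAB ▸ hp).comp_eq_comp_of_semiconj hpB hp' hfix hPB)
  have hsub := hpA.sub (hAB_series ▸ hpB)
  rw [sub_self] at hsub
  filter_upwards [hsub.eventually_eq_zero] with z hz
  exact sub_eq_zero.1 hz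

theorem AnalyticAt.iterate {E : Type*} [NormedAddCommGroup E] [NormedSpace 𝕜 E] {f : E → E}
    {a : E} (hf : AnalyticAt 𝕜 f a) (hfix : f a = a) (m : ℕ) : AnalyticAt 𝕜 f^[m] a := by
  induction m with
  | zero => exact analyticAt_id
  | succ m ih =>
    rw [Function.iterate_succ']
    refine AnalyticAt.comp ?_ ih
    rwa [Function.iterate_fixed hfix m]

end

theorem pow_ne_self_of_one_lt_norm {𝕜 : Type*} [NormedDivisionRing 𝕜] {ν : 𝕜}
    (hν : 1 < ‖ν‖) {m : ℕ} (hm : 2 ≤ m) : ν ^ m ≠ ν := by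
  intro h
  have : ‖ν‖ ^ m = ‖ν‖ ^ 1 := by rw [← norm_pow, h, pow_one]
  exact absurd (pow_right_injective₀ (by positivity) hν.ne' this) (by omega)

theorem ZMod.prod_range_add_natCast {n : ℕ} [NeZero n] {M : Type*} [CommMonoid M]
    (g : ZMod n → M) (i : ZMod n) : ∏ j ∈ Finset.range n, g (i + j) = ∏ u, g u := by
  rw [← Equiv.prod_comp (Equiv.addLeft i) g]
  refine Finset.prod_nbij' (fun j => (j : ZMod n)) ZMod.val (by simp) (by simp [ZMod.val_lt])
    (fun j hj => ZMod.val_cast_of_lt (Finset.mem_range.1 hj)) (fun u _ => ZMod.natCast_zmod_val u)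
    (fun j _ => rfl)

section CyclicComp

variable {n : ℕ} {f : ZMod n → ℂ → ℂ}

theorem cyclicComp_succ' (f : ZMod n → ℂ → ℂ) (i : ZMod n) (m : ℕ) :
    cyclicComp f i (m + 1) = cyclicComp f (i + 1) m ∘ f i := by
  induction m with
  | zero => simp [cyclicComp]
  | succ m ih =>
    change f (i + (m + 1 : ℕ)) ∘ cyclicComp f i (m + 1)
      = f (i + 1 + m) ∘ cyclicComp f (i + 1) m ∘ f i
    rw [ih, Nat.cast_succ, add_comm (m : ZMod n), add_assoc]

theorem cyclicComp_semiconj (f : ZMod n → ℂ → ℂ) (i : ZMod n) :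
    Function.Semiconj (f i) (cyclicComp f i n) (cyclicComp f (i + 1) n) := fun z => by
  change f i (cyclicComp f i n z) = (cyclicComp f (i + 1) n ∘ f i) z
  rw [← cyclicComp_succ']
  change _ = f (i + n) _
  rw [ZMod.natCast_self, add_zero]

theorem cyclicComp_apply_of_cycle {x : ZMod n → ℂ} (hfix : ∀ i, f i (x i) = x (i + 1))
    (i : ZMod n) (m : ℕ) : cyclicComp f i m (x i) = x (i + m) := by
  induction m with
  | zero => simp [cyclicComp]
  | succ m ih =>
    change f (i + m) (cyclicComp f i m (x i)) = _
    rw [ih, hfix, Nat.cast_succ, add_assoc]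

theorem analyticAt_cyclicComp {x : ZMod n → ℂ} (hfix : ∀ i, f i (x i) = x (i + 1))
    (hanal : ∀ i, AnalyticAt ℂ (f i) (x i)) (i : ZMod n) (m : ℕ) :
    AnalyticAt ℂ (cyclicComp f i m) (x i) := by
  induction m with
  | zero => exact analyticAt_id
  | succ m ih =>
    refine AnalyticAt.comp ?_ ih
    rw [cyclicComp_apply_of_cycle hfix]
    exact hanal _

theorem hasDerivAt_cyclicComp {x lam : ZMod n → ℂ} (hfix : ∀ i, f i (x i) = x (i + 1))
    (hder : ∀ i, HasDerivAt (f i) (lam i) (x i)) (i : ZMod n) (m : ℕ) :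
    HasDerivAt (cyclicComp f i m) (∏ j ∈ Finset.range m, lam (i + j)) (x i) := by
  induction m with
  | zero => simpa [cyclicComp] using hasDerivAt_id (x i)
  | succ m ih =>
    rw [Finset.prod_range_succ, mul_comm]
    refine HasDerivAt.comp (x i) ?_ ih
    rw [cyclicComp_apply_of_cycle hfix]
    exact hder _

theorem cyclicComp_apply_self_of_cycle {x : ZMod n → ℂ} (hfix : ∀ i, f i (x i) = x (i + 1))
    (i : ZMod n) : cyclicComp f i n (x i) = x i := by
  rw [cyclicComp_apply_of_cycle hfix, ZMod.natCast_self, add_zero]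

theorem hasDerivAt_cyclicComp_self [NeZero n] {x lam : ZMod n → ℂ}
    (hfix : ∀ i, f i (x i) = x (i + 1)) (hder : ∀ i, HasDerivAt (f i) (lam i) (x i))
    (i : ZMod n) : HasDerivAt (cyclicComp f i n) (∏ u, lam u) (x i) := by
  simpa only [ZMod.prod_range_add_natCast] using hasDerivAt_cyclicComp hfix hder i n

end CyclicComp

/-- If two cyclic systems of holomorphic germs `f_{i,k}`, `k = 1, 2`, share the cycle
`x_i`, have the same multipliers `λ_i` at `x_i` with `|λ_1⋯λ_n| > 1`, and their cyclic
compositions `g_{i,k}` satisfy `g_{i,1}^q = g_{i,2}^q` near `x_i`, then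
`f_{i,1} = f_{i,2}` near each `x_i`. -/
theorem cyclic_koenigs_rigidity
    (n : ℕ) [NeZero n] (x : ZMod n → ℂ)
    (f : Fin 2 → ZMod n → ℂ → ℂ) (lam : ZMod n → ℂ)
    (hanal : ∀ k i, AnalyticAt ℂ (f k i) (x i))
    (hfix : ∀ k i, f k i (x i) = x (i + 1))
    (hder : ∀ k i, deriv (f k i) (x i) = lam i)
    (hmul : 1 < ‖∏ i : ZMod n, lam i‖)
    (q : ℕ) (hq : 1 ≤ q)
    (hg : ∀ i : ZMod n, ∀ᶠ z in 𝓝 (x i),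
      (cyclicComp (f 0) i n)^[q] z = (cyclicComp (f 1) i n)^[q] z) :
    ∀ i : ZMod n, ∀ᶠ z in 𝓝 (x i), f 0 i z = f 1 i z := by
  intro i
  set μ := ∏ u : ZMod n, lam u
  set g : Fin 2 → ZMod n → ℂ → ℂ := fun k j => (cyclicComp (f k) j n)^[q]
  have hg_eq (j) : g 0 j =ᶠ[𝓝 (x j)] g 1 j := hg j
  have hret_fix (j) : cyclicComp (f 0) j n (x j) = x j := cyclicComp_apply_self_of_cycle (hfix 0) j
  have hf_deriv (j) : HasDerivAt (f 0 j) (lam j) (x j) :=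
    hder 0 j ▸ (hanal 0 j).differentiableAt.hasDerivAt
  have hg_anal (j) : AnalyticAt ℂ (g 0 j) (x j) :=
    (analyticAt_cyclicComp (hfix 0) (hanal 0) j n).iterate (hret_fix j) q
  have hg_deriv (j) : deriv (g 0 j) (x j) = μ ^ q :=
    ((hasDerivAt_cyclicComp_self (hfix 0) hf_deriv j).iterate (hx := hret_fix j) (n := q)).deriv
  have hν (m : ℕ) (hm : 2 ≤ m) : (μ ^ q) ^ m ≠ μ ^ q :=
    pow_ne_self_of_one_lt_norm (by rw [norm_pow]; exact one_lt_pow₀ hmul (by omega)) hm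
  have hsemi (k) : Function.Semiconj (f k i) (g k i) (g k (i + 1)) :=
    (cyclicComp_semiconj (f k) i).iterate_right q
  have hsemi_one : g 0 (i + 1) ∘ f 1 i =ᶠ[𝓝 (x i)] f 1 i ∘ g 0 i :=
    calc g 0 (i + 1) ∘ f 1 i
        =ᶠ[𝓝 (x i)] g 1 (i + 1) ∘ f 1 i :=
          (hg_eq (i + 1)).comp_tendsto (hfix 1 i ▸ (hanal 1 i).continuousAt.tendsto)
      _ = f 1 i ∘ g 1 i := (hsemi 1).comp_eq.symm
      _ =ᶠ[𝓝 (x i)] f 1 i ∘ g 0 i := (hg_eq i).symm.fun_comp _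
  exact eventuallyEq_of_semiconj_of_nonresonant hν (hfix 0 i ▸ hg_anal (i + 1)) (hg_anal i)
    (Function.iterate_fixed (hret_fix i) q) (hfix 0 i ▸ hg_deriv (i + 1)) (hg_deriv i)
    (hanal 0 i) (hanal 1 i) ((hfix 0 i).trans (hfix 1 i).symm) ((hder 0 i).trans (hder 1 i).symm)
    (.of_eq (hsemi 0).comp_eq.symm) hsemi_one
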